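/- arXiv:2301.00551 — 3 statements merged into one kernel-verified Lean document; each statement's English description precedes it below -/
import Mathlib

section
/- For every real number x ≠ 0 and every C > 0, |∫_0^C sin(sx)/s ds − sgn(x)·π/2| ≤ 2/(C|x|). -/
/-!
For `t > 0`, `sin t / t = ∫₀^∞ e^{-ts} sin t ds`. The integrand is absolutely integrable on
`(0, T] × (0, ∞)` since `|sin t| / t ≤ 1`, so Fubini and an explicit antiderivative in `t` give
`∫₀^T sin t / t dt = ∫₀^∞ ds / (1 + s²) - R(T) = π / 2 - R(T)` with
`R(T) = ∫₀^∞ e^{-Ts} (cos T + s sin T) / (1 + s²) ds`.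
As `|cos T + s sin T| ≤ √(1 + s²) ≤ 1 + s²`, `|R(T)| ≤ ∫₀^∞ e^{-Ts} ds = 1 / T`.
The substitution `u = s x` and the oddness of `T ↦ ∫₀^T sin t / t dt` reduce the theorem to
this estimate.
-/

open MeasureTheory intervalIntegral Real Set

lemma integral_exp_neg_mul_Ioi_zero {t : ℝ} (ht : 0 < t) :
    ∫ s in Ioi (0:ℝ), exp (-t * s) = 1 / t := by
  rw [integral_exp_mul_Ioi (neg_neg_iff_pos.2 ht), mul_zero, exp_zero, neg_div_neg_eq]

lemma sin_div_eq_integral_exp_neg_mul_mul_sin {t : ℝ} (ht : 0 < t) :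
    sin t / t = ∫ s in Ioi (0:ℝ), exp (-t * s) * sin t := by
  rw [MeasureTheory.integral_mul_const, integral_exp_neg_mul_Ioi_zero ht, one_div_mul_eq_div]

lemma integral_exp_neg_mul_mul_sin (s T : ℝ) :
    ∫ t in (0:ℝ)..T, exp (-t * s) * sin t
      = (1 - exp (-T * s) * (cos T + s * sin T)) / (1 + s ^ 2) := by
  have hs : (1 : ℝ) + s ^ 2 ≠ 0 := by positivity
  have hderiv : ∀ t, HasDerivAt (fun t => -(exp (-t * s) * (cos t + s * sin t)) / (1 + s ^ 2))
      (exp (-t * s) * sin t) t := by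
    intro t
    have hexp : HasDerivAt (fun t => exp (-t * s)) (exp (-t * s) * (-s)) t := by
      simpa using ((hasDerivAt_neg t).mul_const s).exp
    have hcs := (hasDerivAt_cos t).fun_add ((hasDerivAt_sin t).const_mul s)
    refine ((hexp.fun_mul hcs).fun_neg.div_const (1 + s ^ 2)).congr_deriv ?_
    field_simp
    ring
  rw [integral_eq_sub_of_hasDerivAt (fun t _ => hderiv t)
    ((by fun_prop : Continuous _).intervalIntegrable _ _)]
  simp only [neg_mul, neg_zero, zero_mul, exp_zero, cos_zero, sin_zero, mul_zero, add_zero, mul_one]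
  ring

lemma integrable_exp_neg_mul_mul_sin (T : ℝ) :
    Integrable (Function.uncurry fun t s => exp (-t * s) * sin t)
      ((volume.restrict (Ioc (0:ℝ) T)).prod (volume.restrict (Ioi (0:ℝ)))) := by
  have hcont : Continuous (Function.uncurry fun t s : ℝ => exp (-t * s) * sin t) := by
    fun_prop
  rw [integrable_prod_iff hcont.aestronglyMeasurable]
  refine ⟨?_, ?_⟩
  · filter_upwards [ae_restrict_mem measurableSet_Ioc] with t ht
    exact (integrableOn_exp_mul_Ioi (neg_neg_iff_pos.2 ht.1) 0).mul_const (sin t)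
  · have hinner : (fun t => |sin t| / t) =ᵐ[volume.restrict (Ioc (0:ℝ) T)]
        fun t => ∫ s in Ioi (0:ℝ), ‖exp (-t * s) * sin t‖ := by
      filter_upwards [ae_restrict_mem measurableSet_Ioc] with t ht
      simp only [norm_mul, norm_of_nonneg (exp_pos _).le, Real.norm_eq_abs]
      rw [MeasureTheory.integral_mul_const, integral_exp_neg_mul_Ioi_zero ht.1, one_div_mul_eq_div]
    refine (Integrable.mono' (f := fun t => |sin t| / t) (g := fun _ => 1)
      (integrableOn_const measure_Ioc_lt_top.ne)
      (measurable_sin.abs.div measurable_id).aestronglyMeasurable ?_).congr hinner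
    filter_upwards [ae_restrict_mem measurableSet_Ioc] with t ht
    rw [Real.norm_eq_abs, abs_div, abs_abs, abs_of_pos ht.1, div_le_one ht.1]
    exact abs_sin_le_abs.trans_eq (abs_of_pos ht.1)

lemma abs_cos_add_mul_sin_le (T s : ℝ) : |cos T + s * sin T| ≤ 1 + s ^ 2 := by
  have hCS : (cos T + s * sin T) ^ 2 ≤ 1 + s ^ 2 := by
    nlinarith [sq_nonneg (s * cos T - sin T), sin_sq_add_cos_sq T]
  exact abs_le_of_sq_le_sq (by nlinarith [sq_nonneg s]) (by positivity)

lemma norm_exp_neg_mul_mul_cos_add_mul_sin_div_le (T s : ℝ) :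
    ‖exp (-T * s) * (cos T + s * sin T) / (1 + s ^ 2)‖ ≤ exp (-T * s) := by
  rw [Real.norm_eq_abs, abs_div, abs_mul, abs_of_pos (exp_pos _),
    abs_of_pos (by positivity : (0:ℝ) < 1 + s ^ 2), div_le_iff₀ (by positivity)]
  exact mul_le_mul_of_nonneg_left (abs_cos_add_mul_sin_le T s) (exp_pos _).le

theorem integral_sin_div_eq_pi_div_two_sub {T : ℝ} (hT : 0 < T) :
    ∫ t in (0:ℝ)..T, sin t / t
      = π / 2 - ∫ s in Ioi (0:ℝ), exp (-T * s) * (cos T + s * sin T) / (1 + s ^ 2) := by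
  have hrem :
      IntegrableOn (fun s => exp (-T * s) * (cos T + s * sin T) / (1 + s ^ 2)) (Ioi 0) :=
    (integrableOn_exp_mul_Ioi (neg_neg_iff_pos.2 hT) 0).mono'
      ((Continuous.div (by fun_prop) (by fun_prop) fun s => by positivity).aestronglyMeasurable)
      (ae_of_all _ (norm_exp_neg_mul_mul_cos_add_mul_sin_div_le T))
  calc ∫ t in (0:ℝ)..T, sin t / t
      = ∫ t in Ioc (0:ℝ) T, ∫ s in Ioi (0:ℝ), exp (-t * s) * sin t := by
        rw [integral_of_le hT.le]
        exact setIntegral_congr_fun measurableSet_Ioc fun t ht =>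
          sin_div_eq_integral_exp_neg_mul_mul_sin ht.1
    _ = ∫ s in Ioi (0:ℝ), ∫ t in Ioc (0:ℝ) T, exp (-t * s) * sin t :=
        integral_integral_swap (integrable_exp_neg_mul_mul_sin T)
    _ = ∫ s in Ioi (0:ℝ),
          ((1 + s ^ 2)⁻¹ - exp (-T * s) * (cos T + s * sin T) / (1 + s ^ 2)) := by
        congr 1
        ext s
        rw [← integral_of_le hT.le, integral_exp_neg_mul_mul_sin, sub_div, one_div]
    _ = π / 2 - ∫ s in Ioi (0:ℝ), exp (-T * s) * (cos T + s * sin T) / (1 + s ^ 2) := by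
        rw [integral_sub integrable_inv_one_add_sq.integrableOn hrem, integral_Ioi_inv_one_add_sq,
          arctan_zero, sub_zero]

theorem abs_integral_sin_div_sub_pi_div_two_le {T : ℝ} (hT : 0 < T) :
    |(∫ t in (0:ℝ)..T, sin t / t) - π / 2| ≤ 1 / T := by
  rw [integral_sin_div_eq_pi_div_two_sub hT, sub_sub_cancel_left, abs_neg,
    ← integral_exp_neg_mul_Ioi_zero hT]
  exact norm_integral_le_of_norm_le (integrableOn_exp_mul_Ioi (neg_neg_iff_pos.2 hT) 0)
    (ae_of_all _ (norm_exp_neg_mul_mul_cos_add_mul_sin_div_le T))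

lemma integral_sin_div_neg (a : ℝ) :
    ∫ u in (0:ℝ)..-a, sin u / u = -∫ u in (0:ℝ)..a, sin u / u := by
  calc ∫ u in (0:ℝ)..-a, sin u / u = ∫ u in (0:ℝ)..-a, sin (-u) / -u := by
        simp_rw [sin_neg, neg_div_neg_eq]
    _ = -∫ u in (0:ℝ)..a, sin u / u := by
        rw [integral_comp_neg (fun u => sin u / u), neg_neg, neg_zero, integral_symm]

theorem abs_integral_sin_div_sub_sign_mul_pi_div_two_le {a : ℝ} (ha : a ≠ 0) :
    |(∫ u in (0:ℝ)..a, sin u / u) - sign a * (π / 2)| ≤ 1 / |a| := by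
  rcases ha.lt_or_gt with hneg | hpos
  · have := abs_integral_sin_div_sub_pi_div_two_le (neg_pos.2 hneg)
    rw [integral_sin_div_neg, ← abs_neg] at this
    rw [sign_of_neg hneg, abs_of_neg hneg]
    convert this using 2
    ring
  · rw [sign_of_pos hpos, one_mul, abs_of_pos hpos]
    exact abs_integral_sin_div_sub_pi_div_two_le hpos

lemma integral_sin_mul_div (x C : ℝ) :
    ∫ s in (0:ℝ)..C, sin (s * x) / s = ∫ u in (0:ℝ)..C * x, sin u / u := by
  rcases eq_or_ne x 0 with rfl | hx
  · simp
  have hscale : ∀ s : ℝ, sin (s * x) / s = x * (sin (s * x) / (s * x)) := fun s => by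
    rcases eq_or_ne s 0 with rfl | hs
    · simp
    · field_simp
  simp_rw [hscale]
  rw [intervalIntegral.integral_const_mul, integral_comp_mul_right (fun u => sin u / u) hx,
    zero_mul, smul_eq_mul, mul_inv_cancel_left₀ hx]

theorem stmt1 (x C : ℝ) (hx : x ≠ 0) (hC : 0 < C) :
    |(∫ s in (0:ℝ)..C, Real.sin (s * x) / s) - Real.sign x * (π / 2)| ≤ 2 / (C * |x|) := by
  have hsign : sign (C * x) = sign x := by
    rcases hx.lt_or_gt with hneg | hpos
    · rw [sign_of_neg hneg, sign_of_neg (mul_neg_of_pos_of_neg hC hneg)]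
    · rw [sign_of_pos hpos, sign_of_pos (mul_pos hC hpos)]
  rw [integral_sin_mul_div, ← hsign]
  calc _ ≤ 1 / |C * x| := abs_integral_sin_div_sub_sign_mul_pi_div_two_le (mul_ne_zero hC.ne' hx)
    _ ≤ 2 / (C * |x|) := by
        rw [abs_mul, abs_of_pos hC]
        exact div_le_div_of_nonneg_right one_le_two (by positivity)
end

section
/- Let Z be a Cauchy random variable with position parameter p and scale parameter σ > 0, and for a positive integer n let [Z]_n = max(min(Z, n), −n). Then E[[Z]_n] → p as n → ∞. -/
/-!
The law of `Z` is symmetric about `p`, so `E[[Z]_n] = E[[Z]_n + [2p - Z]_n] / 2`. Since `[·]_n`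
is odd and `1`-Lipschitz, `|[x]_n + [2p - x]_n| = |[x]_n - [x - 2p]_n| ≤ 2|p|` uniformly in `n`
and `x`, while `[x]_n + [2p - x]_n = 2p` as soon as `n ≥ max |x| |2p - x|`; dominated convergence
with a constant bound then gives `E[[Z]_n] → p`.
-/

open MeasureTheory Real Filter

noncomputable def cauchyMeasure (p σ : ℝ) : Measure ℝ :=
  volume.withDensity (fun x => ENNReal.ofReal ((1 / (π * σ)) * σ ^ 2 / (σ ^ 2 + (x - p) ^ 2)))

noncomputable def truncAt (n x : ℝ) : ℝ := max (min x n) (-n)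

lemma continuous_truncAt (n : ℝ) : Continuous (truncAt n) := by
  unfold truncAt
  fun_prop

lemma truncAt_neg {n : ℝ} (hn : 0 ≤ n) (x : ℝ) : truncAt n (-x) = -truncAt n x := by
  simp only [truncAt, min_def, max_def]
  split_ifs <;> linarith

lemma abs_truncAt_sub_truncAt_le (n x y : ℝ) : |truncAt n x - truncAt n y| ≤ |x - y| :=
  (abs_max_sub_max_le_max _ _ _ _).trans <| by
    simpa using abs_min_sub_min_le_max x n y n

lemma truncAt_of_abs_le {n x : ℝ} (h : |x| ≤ n) : truncAt n x = x := by
  rw [abs_le] at h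
  rw [truncAt, min_eq_left h.2, max_eq_left h.1]

lemma tendsto_truncAt_atTop (x : ℝ) :
    Tendsto (fun n : ℕ => truncAt n x) atTop (nhds x) :=
  tendsto_const_nhds.congr' <|
    (tendsto_natCast_atTop_atTop.eventually_ge_atTop |x|).mono fun _ h =>
      (truncAt_of_abs_le h).symm

lemma abs_truncAt_le {n : ℝ} (hn : 0 ≤ n) (x : ℝ) : |truncAt n x| ≤ n :=
  abs_le.mpr ⟨le_max_right _ _, max_le (min_le_right _ _) (by linarith)⟩

lemma abs_truncAt_add_truncAt_reflect_le {n : ℝ} (hn : 0 ≤ n) (p x : ℝ) :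
    |truncAt n x + truncAt n (2 * p - x)| ≤ 2 * |p| :=
  calc |truncAt n x + truncAt n (2 * p - x)| = |truncAt n x - truncAt n (x - 2 * p)| := by
        rw [← neg_sub x, truncAt_neg hn, ← sub_eq_add_neg]
    _ ≤ |x - (x - 2 * p)| := abs_truncAt_sub_truncAt_le n x (x - 2 * p)
    _ = 2 * |p| := by rw [sub_sub_cancel, abs_mul, abs_two]

theorem tendsto_integral_truncAt_of_map_reflect_eq {μ : Measure ℝ} [IsFiniteMeasure μ] {p : ℝ}
    (hμ : μ.map (fun x => 2 * p - x) = μ) :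
    Tendsto (fun n : ℕ => ∫ x, truncAt n x ∂μ) atTop (nhds (μ.real Set.univ * p)) := by
  have hint (n : ℕ) (g : ℝ → ℝ) (hg : Continuous g) : Integrable (fun x => truncAt n (g x)) μ :=
    .of_bound ((continuous_truncAt n).comp hg).aestronglyMeasurable n
      (ae_of_all _ fun x => abs_truncAt_le n.cast_nonneg (g x))
  have hsum (n : ℕ) : Integrable (fun x => truncAt n x + truncAt n (2 * p - x)) μ :=
    (hint n (fun x => x) continuous_id).add (hint n (fun x => 2 * p - x) (by fun_prop))
  have hreflect (n : ℕ) : ∫ x, truncAt n (2 * p - x) ∂μ = ∫ x, truncAt n x ∂μ := by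
    conv_rhs => rw [← hμ]
    rw [integral_map (by fun_prop) (continuous_truncAt _).aestronglyMeasurable]
  have hsymm (n : ℕ) :
      ∫ x, truncAt n x ∂μ = (∫ x, truncAt n x + truncAt n (2 * p - x) ∂μ) / 2 := by
    rw [integral_add (hint n (fun x => x) continuous_id)
      (hint n (fun x => 2 * p - x) (by fun_prop)), hreflect]
    ring
  have hdom : Tendsto (fun n : ℕ => ∫ x, truncAt n x + truncAt n (2 * p - x) ∂μ) atTop
      (nhds (∫ x, x + (2 * p - x) ∂μ)) :=
    tendsto_integral_of_dominated_convergence (fun _ => 2 * |p|)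
      (fun n => (hsum n).aestronglyMeasurable) (integrable_const _)
      (fun n => ae_of_all _ fun x => abs_truncAt_add_truncAt_reflect_le n.cast_nonneg p x)
      (ae_of_all _ fun x => (tendsto_truncAt_atTop x).add (tendsto_truncAt_atTop _))
  simp only [add_sub_cancel, integral_const, smul_eq_mul] at hdom
  simpa only [hsymm, mul_div_assoc, mul_div_cancel_left₀ p two_ne_zero] using hdom.div_const 2

lemma map_withDensity_eq_of_comp_eq {α : Type*} [MeasurableSpace α] {μ : Measure α}
    {e : α ≃ᵐ α} (he : MeasurePreserving e μ μ) {f : α → ENNReal} (hf : f ∘ e = f) :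
    (μ.withDensity f).map e = μ.withDensity f := by
  ext s hs
  rw [Measure.map_apply e.measurable hs, withDensity_apply _ (e.measurable hs),
    withDensity_apply _ hs]
  conv_lhs => rw [← hf]
  exact he.setLIntegral_comp_preimage_emb e.measurableEmbedding f s

lemma ProbabilityTheory.cauchyMeasure_map_reflect (x₀ : ℝ) (γ : NNReal) :
    (cauchyMeasure x₀ γ).map (fun x => 2 * x₀ - x) = cauchyMeasure x₀ γ := by
  rcases eq_or_ne γ 0 with rfl | hγ
  · rw [cauchyMeasure_zero_scale, Measure.map_dirac' (by fun_prop), two_mul,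
      add_sub_cancel_right]
  · rw [cauchyMeasure_of_scale_ne_zero x₀ hγ]
    refine map_withDensity_eq_of_comp_eq (e := MeasurableEquiv.subLeft (2 * x₀))
      (Measure.measurePreserving_sub_left volume _) (funext fun x => ?_)
    change cauchyPDF x₀ γ (2 * x₀ - x) = cauchyPDF x₀ γ x
    rw [cauchyPDF_def, cauchyPDF_def, cauchyPDFReal_def, cauchyPDFReal_def,
      show 2 * x₀ - x - x₀ = -(x - x₀) by ring, neg_sq]

lemma cauchyMeasure_eq_cauchyMeasure_toNNReal {p σ : ℝ} (hσ : 0 < σ) :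
    cauchyMeasure p σ = ProbabilityTheory.cauchyMeasure p σ.toNNReal := by
  rw [ProbabilityTheory.cauchyMeasure_of_scale_ne_zero p (Real.toNNReal_pos.mpr hσ).ne',
    cauchyMeasure]
  congr 1
  funext x
  rw [ProbabilityTheory.cauchyPDF_def, ProbabilityTheory.cauchyPDFReal_def]
  congr 1
  rw [Real.coe_toNNReal _ hσ.le]
  field_simp
  ring

theorem stmt12 (p σ : ℝ) (hσ : 0 < σ) :
    Tendsto (fun n : ℕ => ∫ x, max (min x (n : ℝ)) (-(n : ℝ)) ∂(cauchyMeasure p σ))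
      atTop (nhds p) := by
  rw [cauchyMeasure_eq_cauchyMeasure_toNNReal hσ]
  simpa only [truncAt, probReal_univ, one_mul] using tendsto_integral_truncAt_of_map_reflect_eq
    (ProbabilityTheory.cauchyMeasure_map_reflect p σ.toNNReal)
end

section
/- Let f : ℝ² → ℝ be differentiable with ε-Hölder continuous gradient: |∇f(x) − ∇f(y)| ≤ L|x−y|^ε. Then for all x, y ∈ ℝ²: |∫_0^1 f(λx + (1−λ)y) dλ − f((x+y)/2)| ≤ 2^{−1−ε} L |x−y|^{1+ε}. -/
theorem stmt14 (f : EuclideanSpace ℝ (Fin 2) → ℝ) (ε L : ℝ) (hε : 0 < ε) (hL : 0 ≤ L)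
    (hdiff : Differentiable ℝ f)
    (hgrad : ∀ x y, ‖fderiv ℝ f x - fderiv ℝ f y‖ ≤ L * ‖x - y‖ ^ ε) :
    ∀ x y, |(∫ l in (0:ℝ)..1, f (l • x + (1 - l) • y)) - f (midpoint ℝ x y)|
      ≤ (2 : ℝ) ^ (-(1 : ℝ) - ε) * L * ‖x - y‖ ^ ((1 : ℝ) + ε) := by
  intro x y
  set m := midpoint ℝ x y with hm
  set D := fderiv ℝ f m with hD
  set c := (2 : ℝ) ^ (-(1 : ℝ) - ε) * L * ‖x - y‖ ^ ((1 : ℝ) + ε) with hc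
  have hc0 : 0 ≤ c := by positivity
  -- pointwise bound
  have key : ∀ l ∈ Set.Icc (0:ℝ) 1,
      ‖f (l • x + (1 - l) • y) - f m - D ((l - 1/2) • (x - y))‖ ≤ c := by
    intro l hl
    set a := l • x + (1 - l) • y with ha
    have ham : a - m = (l - 1/2) • (x - y) := by
      rw [ha, hm, midpoint_eq_smul_add]
      rw [show (⅟2 : ℝ) = (1/2 : ℝ) by norm_num]
      module
    have hnam : ‖a - m‖ = |l - 1/2| * ‖x - y‖ := by
      rw [ham, norm_smul, Real.norm_eq_abs]
    have bound : ∀ z ∈ segment ℝ m a, ‖fderiv ℝ f z - D‖ ≤ L * ‖a - m‖ ^ ε := by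
      intro z hz
      refine (hgrad z m).trans ?_
      refine mul_le_mul_of_nonneg_left ?_ hL
      refine Real.rpow_le_rpow (norm_nonneg _) ?_ hε.le
      obtain ⟨s, t, hs, ht, hst, rfl⟩ := hz
      have : s • m + t • a - m = t • (a - m) := by
        have : s = 1 - t := by linarith
        rw [this]; module
      rw [this, norm_smul, Real.norm_eq_abs, abs_of_nonneg ht]
      have := norm_nonneg (a - m)
      nlinarith
    have taylor : ‖f a - f m - D (a - m)‖ ≤ (L * ‖a - m‖ ^ ε) * ‖a - m‖ :=
      (convex_segment m a).norm_image_sub_le_of_norm_fderiv_le'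
        (fun z _ => hdiff z) bound (left_mem_segment ℝ m a) (right_mem_segment ℝ m a)
    rw [ham] at taylor
    refine taylor.trans ?_
    have hnv : ‖(l - 1/2) • (x - y)‖ = |l - 1/2| * ‖x - y‖ := by
      rw [norm_smul, Real.norm_eq_abs]
    have hA : (0:ℝ) ≤ |l - 1/2| := abs_nonneg _
    have hB : (0:ℝ) ≤ ‖x - y‖ := norm_nonneg _
    have e1 : L * ‖(l - 1/2) • (x - y)‖ ^ ε * ‖(l - 1/2) • (x - y)‖
        = L * |l - 1/2| ^ ((1:ℝ)+ε) * ‖x - y‖ ^ ((1:ℝ)+ε) := by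
      rw [hnv, Real.mul_rpow hA hB, Real.rpow_add' hA (by positivity),
        Real.rpow_add' hB (by positivity), Real.rpow_one, Real.rpow_one]
      ring
    rw [e1, hc]
    have habs : |l - 1/2| ≤ 1/2 := by
      rw [abs_le]; constructor <;> [linarith [hl.1]; linarith [hl.2]]
    have h2 : ((1:ℝ)/2) ^ ((1:ℝ) + ε) = (2:ℝ) ^ (-(1:ℝ) - ε) := by
      rw [show -(1:ℝ) - ε = -(1 + ε) by ring, Real.rpow_neg (by norm_num),
        ← Real.inv_rpow (by norm_num)]
      norm_num
    have h1 : |l - 1/2| ^ ((1:ℝ) + ε) ≤ (2:ℝ) ^ (-(1:ℝ) - ε) :=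
      h2 ▸ Real.rpow_le_rpow (abs_nonneg _) habs (by positivity)
    have h3 : 0 ≤ ‖x - y‖ ^ ((1:ℝ) + ε) := by positivity
    calc L * |l - 1/2| ^ ((1:ℝ)+ε) * ‖x - y‖ ^ ((1:ℝ)+ε)
        ≤ L * ((2:ℝ) ^ (-(1:ℝ) - ε)) * ‖x - y‖ ^ ((1:ℝ)+ε) :=
          mul_le_mul_of_nonneg_right (mul_le_mul_of_nonneg_left h1 hL) h3
      _ = (2:ℝ) ^ (-(1:ℝ) - ε) * L * ‖x - y‖ ^ ((1:ℝ)+ε) := by ring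
  -- integrability
  have hcont : Continuous (fun l : ℝ => f (l • x + (1 - l) • y)) :=
    hdiff.continuous.comp
      ((continuous_id.smul continuous_const).add
        ((continuous_const.sub continuous_id).smul continuous_const))
  have hI1 : IntervalIntegrable (fun l : ℝ => f (l • x + (1 - l) • y))
      MeasureTheory.volume 0 1 := hcont.intervalIntegrable 0 1
  have hI2 : IntervalIntegrable (fun _ : ℝ => f m) MeasureTheory.volume 0 1 :=
    intervalIntegrable_const
  have hI3 : IntervalIntegrable (fun l : ℝ => D ((l - 1/2) • (x - y)))
      MeasureTheory.volume 0 1 := by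
    apply Continuous.intervalIntegrable
    exact D.continuous.comp ((continuous_id.sub continuous_const).smul continuous_const)
  have hlin : (∫ l in (0:ℝ)..1, D ((l - 1/2) • (x - y))) = 0 := by
    have : ∀ l : ℝ, D ((l - 1/2) • (x - y)) = (l - 1/2) * D (x - y) := by
      intro l; rw [map_smul]; simp
    simp_rw [this]
    have hid : IntervalIntegrable (fun t : ℝ => t) MeasureTheory.volume 0 1 :=
      continuous_id.intervalIntegrable 0 1
    rw [intervalIntegral.integral_mul_const,
      intervalIntegral.integral_sub hid intervalIntegrable_const, integral_id]
    norm_num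
  have split : (∫ l in (0:ℝ)..1, f (l • x + (1 - l) • y)) - f m
      = ∫ l in (0:ℝ)..1, (f (l • x + (1 - l) • y) - f m - D ((l - 1/2) • (x - y))) := by
    rw [intervalIntegral.integral_sub (hI1.sub hI2) hI3,
      intervalIntegral.integral_sub hI1 hI2, hlin]
    simp
  rw [← Real.norm_eq_abs, split]
  have := intervalIntegral.norm_integral_le_of_norm_le_const
    (C := c) (f := fun l : ℝ => f (l • x + (1 - l) • y) - f m - D ((l - 1/2) • (x - y)))
    (a := 0) (b := 1) (fun l hl => key l (Set.mem_Icc_of_Ioc (by rwa [Set.uIoc_of_le zero_le_one] at hl)))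
  simpa using this
end
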